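/- arXiv:2303.08082 — 3 statements merged into one kernel-verified Lean document; each statement's English description precedes it below -/
import Mathlib

section
/- If an R-algebra A admits a quasimonomial basis parameterized by some enhanced monoid (Λ, d), then A is a domain. -/
/-- Lexicographic (strict) order on `ℤ^r`. -/
def LexLt {r : ℕ} (a b : Fin r → ℤ) : Prop :=
  ∃ i : Fin r, (∀ j : Fin r, j < i → a j = b j) ∧ a i < b i

/-- `e : Λ → A` is a *quasimonomial basis* of the `R`-algebra `A` parameterized by the
enhanced monoid `(Λ, d)` (with `d : Λ → ℤ^r`) if `e` is a free `R`-module basis of `A`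
and for all `m, m' ∈ Λ` one has
`e m * e m' = q̂^(2t) • (e (m + m') + x)` for some `t ∈ ℤ` and some `x` in the `R`-span
of the `e k` with `d k <_lex d (m + m')`. -/
def IsQuasimonomialBasis (R : Type*) [CommRing R] {A : Type*} [Ring A] [Algebra R A]
    (qh : Rˣ) {Λ : Type*} [AddCommMonoid Λ] {r : ℕ}
    (d : Λ → Fin r → ℤ) (e : Λ → A) : Prop :=
  LinearIndependent R e ∧ Submodule.span R (Set.range e) = ⊤ ∧
    ∀ m m' : Λ, ∃ t : ℤ,
      ∃ x ∈ Submodule.span R (e '' {k : Λ | LexLt (d k) (d (m + m'))}),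
        e m * e m' = ((qh ^ (2 * t) : Rˣ) : R) • (e (m + m') + x)

section Aux

variable {r : ℕ}

theorem lexLt_iff_toLex_lt (a b : Fin r → ℤ) : LexLt a b ↔ toLex a < toLex b := Iff.rfl

theorem lexLt_irrefl (a : Fin r → ℤ) : ¬ LexLt a a :=
  fun h => lt_irrefl (toLex a) ((lexLt_iff_toLex_lt a a).1 h)

theorem lexLt_trans {a b c : Fin r → ℤ} (h1 : LexLt a b) (h2 : LexLt b c) : LexLt a c :=
  (lexLt_iff_toLex_lt a c).2 (lt_trans ((lexLt_iff_toLex_lt a b).1 h1)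
    ((lexLt_iff_toLex_lt b c).1 h2))

theorem lexLt_add_right {a b : Fin r → ℤ} (c : Fin r → ℤ) (h : LexLt a b) :
    LexLt (a + c) (b + c) := by
  obtain ⟨i, h1, h2⟩ := h
  exact ⟨i, fun j hj => by simp [h1 j hj], by simpa using h2⟩

/-- `LexLe a b` iff `a = b` or `LexLt a b`. -/
def LexLe (a b : Fin r → ℤ) : Prop := LexLt a b ∨ a = b

theorem lexLe_add {a b a' b' : Fin r → ℤ} (h : LexLe a b) (h' : LexLe a' b') :
    LexLe (a + a') (b + b') := by
  rcases h with h | rfl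
  · rcases h' with h' | rfl
    · exact Or.inl (lexLt_trans (lexLt_add_right a' h)
        (by rw [add_comm b a', add_comm b b']; exact lexLt_add_right b h'))
    · exact Or.inl (lexLt_add_right a' h)
  · rcases h' with h' | rfl
    · rw [add_comm a a', add_comm a b']
      exact Or.inl (lexLt_add_right a h')
    · exact Or.inr rfl

/-- A manual linear order on `Lex (Fin r → ℤ)` (the instance is not found automatically). -/
noncomputable def lexPiLinearOrder (r : ℕ) : LinearOrder (Lex (Fin r → ℤ)) :=
  @linearOrderOfSTO _ (· < ·)
    { trichotomous :=
        (Pi.isTrichotomous_lex _ _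
          (IsWellFounded.wf (r := ((· < ·) : Fin r → Fin r → Prop)))).1 }
    (Classical.decRel _)

end Aux

/-- If an `R`-algebra `A` admits a quasimonomial basis parameterized by an enhanced
monoid `(Λ, d)` (`Λ` a submonoid of a free abelian group, `d` a monoid homomorphism to
`ℤ^r`), then `A` is a domain. -/
theorem noZeroDivisors_of_quasimonomialBasis
    {R : Type*} [CommRing R] [IsDomain R] (qh : Rˣ)
    {A : Type*} [Ring A] [Algebra R A]
    {Λ : Type*} [AddCommMonoid Λ]
    {κ : Type*} (emb : Λ →+ (κ →₀ ℤ)) (hemb : Function.Injective emb)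
    {r : ℕ} (d : Λ → Fin r → ℤ)
    (hd : ∀ m m' : Λ, d (m + m') = d m + d m')
    (e : Λ → A)
    (h : IsQuasimonomialBasis R qh d e) :
    NoZeroDivisors A := by
  classical
  obtain ⟨hli, hsp, hmul⟩ := h
  letI : LinearOrder κ := IsWellOrder.linearOrder WellOrderingRel
  letI : LinearOrder (Lex (Fin r → ℤ)) := lexPiLinearOrder r
  -- the combined comparison map
  set f : Λ → Lex (Lex (Fin r → ℤ) × Lex (κ →₀ ℤ)) :=
    fun m => toLex (toLex (d m), toLex (emb m)) with hf
  have finj : Function.Injective f := by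
    intro n m hnm
    have : (toLex (d n), toLex (emb n)) = (toLex (d m), toLex (emb m)) :=
      toLex.injective hnm
    exact hemb (toLex.injective (congrArg Prod.snd this))
  -- `f` respects addition strictly
  have flt_add : ∀ n m k : Λ, f n < f m → f (n + k) < f (m + k) := by
    intro n m k hnm
    rw [hf] at hnm ⊢
    rcases (Prod.Lex.lt_iff).1 hnm with h1 | ⟨h1, h2⟩
    · refine (Prod.Lex.lt_iff).2 (Or.inl ?_)
      have : LexLt (d n + d k) (d m + d k) := lexLt_add_right _ h1
      show LexLt (d (n + k)) (d (m + k))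
      rw [hd n k, hd m k]
      exact this
    · refine (Prod.Lex.lt_iff).2 (Or.inr ⟨?_, ?_⟩)
      · simp only [hd n k, hd m k]
        exact congrArg (fun z => toLex (z + d k)) (toLex.injective h1)
      · simp only [map_add, toLex_add]
        exact add_lt_add_of_lt_of_le h2 (le_refl (toLex (emb k)))
  have fle_add : ∀ n m k : Λ, f n ≤ f m → f (n + k) ≤ f (m + k) := by
    intro n m k hnm
    rcases lt_or_eq_of_le hnm with hlt | heq
    · exact le_of_lt (flt_add n m k hlt)
    · exact le_of_eq (congrArg f (by rw [finj heq]))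
  have fadd : ∀ {n m n' m' : Λ}, f n ≤ f m → f n' ≤ f m' → ((n, n') ≠ (m, m')) →
      f (n + n') < f (m + m') := by
    intro n m n' m' h1 h2 hne
    rcases lt_or_eq_of_le h1 with hlt1 | heq1
    · have step1 : f (n + n') < f (m + n') := flt_add n m n' hlt1
      have step2 : f (m + n') ≤ f (m + m') := by
        rw [add_comm m n', add_comm m m']
        exact fle_add n' m' m h2
      exact lt_of_lt_of_le step1 step2
    · have hnm : n = m := finj heq1
      subst hnm
      rcases lt_or_eq_of_le h2 with hlt2 | heq2
      · have : f (n' + n) < f (m' + n) := flt_add n' m' n hlt2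
        rw [add_comm n' n, add_comm m' n] at this
        exact this
      · exact absurd (by rw [finj heq2]) hne
  -- `f` dominates `d` lexicographically
  have fd : ∀ {n m : Λ}, f n ≤ f m → LexLe (d n) (d m) := by
    intro n m hnm
    rcases (Prod.Lex.le_iff).1 hnm with h1 | ⟨h1, _⟩
    · exact Or.inl h1
    · exact Or.inr (toLex.injective h1)
  -- set up the basis
  let B : Module.Basis Λ R A := Module.Basis.mk hli (by rw [hsp])
  have hBe : ∀ m : Λ, B m = e m := fun m => Module.Basis.mk_apply hli _ m
  -- coefficient functional
  let L : ∀ _ : Λ, A →ₗ[R] R := fun k => (Finsupp.lapply k).comp B.repr.toLinearMap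
  have hL : ∀ (k : Λ) (v : A), L k v = B.repr v k := fun _ _ => rfl
  have hLe : ∀ k j : Λ, j ≠ k → L k (e j) = 0 := by
    intro k j hjk
    rw [hL, ← hBe j, B.repr_self, Finsupp.single_eq_of_ne hjk.symm]
  have hLe' : ∀ k : Λ, L k (e k) = 1 := by
    intro k
    rw [hL, ← hBe k, B.repr_self, Finsupp.single_eq_same]
  -- coefficient vanishing on spans avoiding the index
  have hcz : ∀ (S : Set Λ) (k : Λ), k ∉ S →
      ∀ x ∈ Submodule.span R (e '' S), L k x = 0 := by
    intro S k hk x hx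
    induction hx using Submodule.span_induction with
    | mem y hy =>
      obtain ⟨j, hj, rfl⟩ := hy
      exact hLe k j (fun hjk => hk (hjk ▸ hj))
    | zero => simp
    | add x y _ _ hx hy => rw [map_add, hx, hy, add_zero]
    | smul c x _ hx => rw [map_smul, hx, smul_zero]
  constructor
  intro a b hab
  by_contra hcon
  push_neg at hcon
  obtain ⟨ha, hb⟩ := hcon
  -- supports
  have hra : B.repr a ≠ 0 := fun hz => ha (by
    have := congrArg B.repr.symm hz
    simpa using this)
  have hrb : B.repr b ≠ 0 := fun hz => hb (by
    have := congrArg B.repr.symm hz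
    simpa using this)
  set sa := (B.repr a).support with hsa
  set sb := (B.repr b).support with hsb
  have hsane : sa.Nonempty := Finsupp.support_nonempty_iff.mpr hra
  have hsbne : sb.Nonempty := Finsupp.support_nonempty_iff.mpr hrb
  obtain ⟨m, hmsa, hm⟩ := Finset.exists_max_image sa f hsane
  obtain ⟨m', hmsb, hm'⟩ := Finset.exists_max_image sb f hsbne
  -- the product of two basis elements, evaluated at m + m'
  have hlow : ∀ n n' : Λ, f n ≤ f m → f n' ≤ f m' →
      ∀ x ∈ Submodule.span R (e '' {k : Λ | LexLt (d k) (d (n + n'))}),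
        L (m + m') x = 0 := by
    intro n n' h1 h2 x hx
    refine hcz _ _ ?_ x hx
    intro hmem
    have hle : LexLe (d (n + n')) (d (m + m')) := by
      rw [hd n n', hd m m']
      exact lexLe_add (fd h1) (fd h2)
    have hlt : LexLt (d (m + m')) (d (n + n')) := hmem
    rcases hle with hlt' | heq
    · exact lexLt_irrefl _ (lexLt_trans hlt hlt')
    · rw [heq] at hlt
      exact lexLt_irrefl _ hlt
  have hpair : ∀ n ∈ sa, ∀ n' ∈ sb, (n, n') ≠ (m, m') → L (m + m') (e n * e n') = 0 := by
    intro n hn n' hn' hne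
    obtain ⟨t, x, hx, heq⟩ := hmul n n'
    have h1 : n + n' ≠ m + m' := by
      intro hcon'
      exact absurd (congrArg f hcon') (ne_of_lt (fadd (hm n hn) (hm' n' hn') hne))
    rw [heq, map_smul, map_add, hLe _ _ h1, hlow n n' (hm n hn) (hm' n' hn') x hx,
      add_zero, smul_zero]
  obtain ⟨t, x, hx, heqm⟩ := hmul m m'
  have hmain : L (m + m') (e m * e m') = ((qh ^ (2 * t) : Rˣ) : R) := by
    rw [heqm, map_smul, map_add, hLe' (m + m'),
      hlow m m' (le_refl _) (le_refl _) x hx, add_zero, smul_eq_mul, mul_one]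
  -- expand a and b
  have hasum : a = ∑ n ∈ sa, B.repr a n • e n := by
    have := B.linearCombination_repr a
    rw [Finsupp.linearCombination_apply, Finsupp.sum] at this
    conv_lhs => rw [← this]
    exact Finset.sum_congr rfl (fun n _ => by rw [hBe n])
  have hbsum : b = ∑ n' ∈ sb, B.repr b n' • e n' := by
    have := B.linearCombination_repr b
    rw [Finsupp.linearCombination_apply, Finsupp.sum] at this
    conv_lhs => rw [← this]
    exact Finset.sum_congr rfl (fun n _ => by rw [hBe n])
  have hcalc : L (m + m') (a * b)
      = ∑ n ∈ sa, ∑ n' ∈ sb, (B.repr a n * B.repr b n') • L (m + m') (e n * e n') := by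
    conv_lhs => rw [hasum, hbsum]
    rw [Finset.sum_mul_sum, map_sum]
    refine Finset.sum_congr rfl (fun n _ => ?_)
    rw [map_sum]
    refine Finset.sum_congr rfl (fun n' _ => ?_)
    rw [smul_mul_assoc, mul_smul_comm, map_smul, map_smul, smul_smul]
  have hfinal : L (m + m') (a * b)
      = (B.repr a m * B.repr b m') * ((qh ^ (2 * t) : Rˣ) : R) := by
    rw [hcalc]
    rw [Finset.sum_eq_single m]
    · rw [Finset.sum_eq_single m']
      · rw [hmain, smul_eq_mul]
      · intro n' hn' hne'
        rw [hpair m hmsa n' hn' (by simp [hne']), smul_zero]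
      · intro hme
        exact absurd hmsb hme
    · intro n hn hne
      refine Finset.sum_eq_zero (fun n' hn' => ?_)
      rw [hpair n hn n' hn' (by simp [hne]), smul_zero]
    · intro hme
      exact absurd hmsa hme
  rw [hab, map_zero] at hfinal
  have h1 : B.repr a m ≠ 0 := Finsupp.mem_support_iff.mp hmsa
  have h2 : B.repr b m' ≠ 0 := Finsupp.mem_support_iff.mp hmsb
  have h3 : ((qh ^ (2 * t) : Rˣ) : R) ≠ 0 := Units.ne_zero _
  exact (mul_ne_zero (mul_ne_zero h1 h2) h3) hfinal.symm
end

section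
/- Let A be an R-algebra with a quasimonomial basis {e(m) : m ∈ Λ} parameterized by the enhanced monoid (Λ, d), and let I ◁ A be a two-sided ideal which, as an R-module, equals the R-span of {e(m) : m ∈ Λ ∖ Λ̄} for some submonoid Λ̄ ⊆ Λ. Then the images of e(m) for m ∈ Λ̄ under the projection A → A/I form a quasimonomial basis of A/I parameterized by (Λ̄, d restricted to Λ̄); in particular A/I is a domain. -/
private lemma repr_eq_zero_of_mem_span' {R M ι : Type*} [CommRing R] [AddCommGroup M] [Module R M]
    (b : Module.Basis ι R M) (v : ι → M) (hv : ∀ i, b i = v i) (S : Set ι) {x : M}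
    (hx : x ∈ Submodule.span R (v '' S)) {m : ι} (hm : m ∉ S) : b.repr x m = 0 := by
  classical
  have hle : Submodule.span R (v '' S) ≤
      LinearMap.ker ((Finsupp.lapply m).comp (b.repr : M →ₗ[R] ι →₀ R)) := by
    rw [Submodule.span_le]
    rintro _ ⟨k, hk, rfl⟩
    have hrepr : b.repr (v k) = Finsupp.single k 1 := by rw [← hv]; exact b.repr_self k
    simp only [SetLike.mem_coe, LinearMap.mem_ker, LinearMap.coe_comp, Function.comp_apply,
      Finsupp.lapply_apply, LinearEquiv.coe_coe]
    rw [hrepr, Finsupp.single_apply, if_neg]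
    intro h
    exact absurd (h ▸ hk) hm
  exact hle hx

/-- Let `A` have a quasimonomial basis `e` parameterized by the enhanced monoid `(Λ, d)`,
and let `I ◁ A` be a two-sided ideal (realized as the kernel of a surjective `R`-algebra
homomorphism `π : A → B`) equal, as an `R`-module, to the span of the `e m` for
`m ∈ Λ \ Λ'` for a submonoid `Λ' ⊆ Λ`.  Then the images `π (e m)`, `m ∈ Λ'`, form a
quasimonomial basis of `B = A/I` parameterized by `(Λ', d|Λ')`; in particular `A/I` is a
domain. -/
theorem quasimonomialBasis_quotient
    {R : Type*} [CommRing R] [IsDomain R] (qh : Rˣ)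
    {A : Type*} [Ring A] [Algebra R A]
    {Λ : Type*} [AddCommMonoid Λ]
    {κ : Type*} (emb : Λ →+ (κ →₀ ℤ)) (hemb : Function.Injective emb)
    {r : ℕ} (d : Λ → Fin r → ℤ) (hd : ∀ m m' : Λ, d (m + m') = d m + d m')
    (e : Λ → A) (hb : IsQuasimonomialBasis R qh d e)
    (Λ' : AddSubmonoid Λ)
    {B : Type*} [Ring B] [Algebra R B]
    (π : A →ₐ[R] B) (hsurj : Function.Surjective π)
    (hker : ∀ x : A, π x = 0 ↔ x ∈ Submodule.span R (e '' {m : Λ | m ∉ Λ'})) :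
    IsQuasimonomialBasis R qh (fun m : Λ' => d ↑m) (fun m : Λ' => π (e ↑m)) ∧
    NoZeroDivisors B := by
  classical
  obtain ⟨hli, hsp, hmul⟩ := hb
  set f : Λ' → B := fun m : Λ' => π (e ↑m) with hfdef
  have hsp' : ⊤ ≤ Submodule.span R (Set.range e) := hsp.ge
  let bA : Module.Basis Λ R A := Module.Basis.mk hli hsp'
  have hbA : ∀ m, bA m = e m := fun m => Module.Basis.mk_apply hli hsp' m
  have hπ0 : ∀ m : Λ, m ∉ Λ' → π (e m) = 0 := fun m hm =>
    (hker _).2 (Submodule.subset_span ⟨m, hm, rfl⟩)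
  -- linear independence
  have hli' : LinearIndependent R f := by
    have h1 : LinearIndependent R (fun m : Λ' => e ↑m) :=
      hli.comp _ Subtype.coe_injective
    have h2 : Disjoint (Submodule.span R (Set.range fun m : Λ' => e (↑m : Λ)))
        (LinearMap.ker π.toLinearMap) := by
      rw [Submodule.disjoint_def]
      intro x hx1 hx2
      have hx1' : x ∈ Submodule.span R (e '' {m : Λ | m ∈ Λ'}) := by
        have : (Set.range fun m : Λ' => e (↑m : Λ)) = e '' {m : Λ | m ∈ Λ'} := by
          ext y; constructor
          · rintro ⟨⟨k, hk⟩, rfl⟩; exact ⟨k, hk, rfl⟩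
          · rintro ⟨k, hk, rfl⟩; exact ⟨⟨k, hk⟩, rfl⟩
        rwa [this] at hx1
      have hx2' : x ∈ Submodule.span R (e '' {m : Λ | m ∉ Λ'}) := by
        rw [← hker]
        simpa using hx2
      have hr0 : bA.repr x = 0 := by
        ext m
        by_cases hm : m ∈ Λ'
        · exact repr_eq_zero_of_mem_span' bA e hbA _ hx2' (by simpa using hm)
        · exact repr_eq_zero_of_mem_span' bA e hbA _ hx1' hm
      simpa using bA.repr.map_eq_zero_iff.1 hr0
    exact h1.map h2
  -- span
  have hsp2 : Submodule.span R (Set.range f) = ⊤ := by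
    rw [eq_top_iff]
    rintro y -
    obtain ⟨x, rfl⟩ := hsurj y
    have hx := bA.linearCombination_repr x
    rw [Finsupp.linearCombination_apply] at hx
    have hπx : π x = (bA.repr x).sum fun m c => c • π (e m) := by
      conv_lhs => rw [← hx]
      rw [map_finsuppSum]
      refine Finsupp.sum_congr fun m _ => ?_
      rw [map_smul, hbA]
    rw [hπx, Finsupp.sum]
    refine Submodule.sum_mem _ fun m _ => ?_
    by_cases hm : m ∈ Λ'
    · exact Submodule.smul_mem _ _ (Submodule.subset_span ⟨⟨m, hm⟩, rfl⟩)
    · rw [hπ0 m hm, smul_zero]; exact Submodule.zero_mem _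
  -- multiplication rule
  have hmul' : ∀ m m' : Λ', ∃ t : ℤ,
      ∃ x ∈ Submodule.span R (f '' {k : Λ' | LexLt (d ↑k) (d (↑(m + m') : Λ))}),
        f m * f m' = ((qh ^ (2 * t) : Rˣ) : R) • (f (m + m') + x) := by
    intro m m'
    obtain ⟨t, x, hx, hEq⟩ := hmul ↑m ↑m'
    have hcoe : ((↑(m + m') : Λ)) = (↑m + ↑m' : Λ) := rfl
    refine ⟨t, π x, ?_, ?_⟩
    · have h1 : π x ∈ Submodule.map π.toLinearMap
          (Submodule.span R (e '' {k : Λ | LexLt (d k) (d (↑m + ↑m' : Λ))})) :=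
        ⟨x, hx, rfl⟩
      rw [Submodule.map_span] at h1
      have h2 : (π.toLinearMap '' (e '' {k : Λ | LexLt (d k) (d (↑m + ↑m' : Λ))})) ⊆
          insert 0 (f '' {k : Λ' | LexLt (d ↑k) (d (↑(m + m') : Λ))}) := by
        rintro _ ⟨_, ⟨k, hk, rfl⟩, rfl⟩
        by_cases hk' : k ∈ Λ'
        · right
          exact ⟨⟨k, hk'⟩, by rwa [Set.mem_setOf_eq, hcoe], rfl⟩
        · left
          exact hπ0 k hk'
      have h3 := Submodule.span_mono h2 h1
      rwa [Submodule.span_insert_zero] at h3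
    · have h := congrArg π hEq
      rw [map_mul, map_smul, map_add] at h
      rw [h]
      rfl
  refine ⟨⟨hli', hsp2, hmul'⟩, ⟨?_⟩⟩
  -- no zero divisors
  intro a b hab
  by_contra hcon
  push_neg at hcon
  obtain ⟨ha, hb2⟩ := hcon
  -- basis of B
  have hspc : ⊤ ≤ Submodule.span R (Set.range f) := hsp2.ge
  let cB : Module.Basis Λ' R B := Module.Basis.mk hli' hspc
  have hcB : ∀ m, cB m = f m := fun m => Module.Basis.mk_apply hli' hspc m
  -- order setup
  haveI : WellFoundedLT (Fin r) := inferInstance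
  letI := Classical.decRel (WellOrderingRel (α := κ))
  letI : LinearOrder κ := linearOrderOfSTO WellOrderingRel
  let M := Lex (Fin r → ℤ) ×ₗ Lex (κ →₀ ℤ)
  haveI : IsOrderedCancelAddMonoid M := inferInstance
  let G : Λ → M := fun m => toLex (toLex (d m), toLex (emb m))
  have hGadd : ∀ m m' : Λ, G (m + m') = G m + G m' := by
    intro m m'
    show toLex (toLex (d (m + m')), toLex (emb (m + m'))) = _
    rw [hd, emb.map_add]
    rfl
  have hGinj : Function.Injective G := by
    intro m m' h
    apply hemb
    exact congrArg (fun z : M => ofLex (ofLex z).2) h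
  have hlexiff : ∀ a b : Fin r → ℤ, LexLt a b ↔ toLex a < toLex b := fun _ _ => Iff.rfl
  have hGd : ∀ m m' : Λ, G m ≤ G m' → ¬ LexLt (d m') (d m) := by
    intro m m' h hlt
    have h1 : toLex (d m) ≤ toLex (d m') := by
      rcases Prod.Lex.le_iff.1 h with h' | h'
      · exact le_of_lt h'
      · exact le_of_eq h'.1
    exact absurd (lt_of_lt_of_le ((hlexiff _ _).1 hlt) h1) (lt_irrefl _)
  -- supports
  have hα : cB.repr a ≠ 0 := fun h => ha (cB.repr.map_eq_zero_iff.1 h)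
  have hβ : cB.repr b ≠ 0 := fun h => hb2 (cB.repr.map_eq_zero_iff.1 h)
  obtain ⟨m₀, hm₀s, hm₀max⟩ := Finset.exists_max_image (cB.repr a).support
    (fun m : Λ' => G ↑m) (Finsupp.support_nonempty_iff.2 hα)
  obtain ⟨m₀', hm₀'s, hm₀'max⟩ := Finset.exists_max_image (cB.repr b).support
    (fun m : Λ' => G ↑m) (Finsupp.support_nonempty_iff.2 hβ)
  set N : Λ' := m₀ + m₀' with hN
  let φ : B →ₗ[R] R := (Finsupp.lapply N).comp (cB.repr : B →ₗ[R] Λ' →₀ R)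
  have hφf : ∀ k : Λ', φ (f k) = if k = N then 1 else 0 := by
    intro k
    show (cB.repr (f k)) N = _
    rw [← hcB, cB.repr_self, Finsupp.single_apply]
  -- key evaluations
  have hpair : ∀ m ∈ (cB.repr a).support, ∀ m' ∈ (cB.repr b).support,
      ∃ t : ℤ, φ (f m * f m') = if m + m' = N then ((qh ^ (2 * t) : Rˣ) : R) else 0 := by
    intro m hm m' hm'
    obtain ⟨t, x, hx, hEq⟩ := hmul' m m'
    refine ⟨t, ?_⟩
    have hle : G (↑(m + m') : Λ) ≤ G (↑N : Λ) := by
      show G ((↑m : Λ) + ↑m') ≤ G ((↑m₀ : Λ) + ↑m₀')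
      rw [hGadd, hGadd]
      exact add_le_add (hm₀max m hm) (hm₀'max m' hm')
    have hφx : φ x = 0 := by
      show (cB.repr x) N = 0
      refine repr_eq_zero_of_mem_span' cB f hcB _ hx ?_
      intro hNmem
      exact hGd _ _ hle hNmem
    have := congrArg φ hEq
    rw [map_smul, map_add, hφx, add_zero, hφf] at this
    rw [this, smul_eq_mul, mul_ite, mul_one, mul_zero]
  -- pairs other than (m₀, m₀') don't contribute
  have hne : ∀ m ∈ (cB.repr a).support, ∀ m' ∈ (cB.repr b).support,
      ¬(m = m₀ ∧ m' = m₀') → m + m' ≠ N := by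
    intro m hm m' hm' hne12 hEq
    apply hne12
    have h1 : G ↑m ≤ G ↑m₀ := hm₀max m hm
    have h2 : G ↑m' ≤ G ↑m₀' := hm₀'max m' hm'
    have hGsum : G ((↑m : Λ) + ↑m') = G ((↑m₀ : Λ) + ↑m₀') := by
      have : ((↑(m + m') : Λ)) = ((↑N : Λ)) := congrArg _ hEq
      simpa [hN] using congrArg G this
    rw [hGadd, hGadd] at hGsum
    have hmeq : G (↑m : Λ) = G ↑m₀ := le_antisymm h1 (by
      by_contra hcontra
      push_neg at hcontra
      have h1' : G (↑m : Λ) < G ↑m₀ := lt_of_le_of_ne h1 (fun h => (lt_irrefl _ (h ▸ hcontra)).elim)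
      exact absurd hGsum (ne_of_lt (add_lt_add_of_lt_of_le h1' h2)))
    have hm'eq : G (↑m' : Λ) = G ↑m₀' := by
      have := hGsum
      rw [hmeq] at this
      exact add_left_cancel this
    exact ⟨Subtype.coe_injective (hGinj hmeq), Subtype.coe_injective (hGinj hm'eq)⟩
  -- expand a and b
  have hasum : a = ∑ m ∈ (cB.repr a).support, (cB.repr a) m • f m := by
    conv_lhs => rw [← cB.linearCombination_repr a]
    rw [Finsupp.linearCombination_apply, Finsupp.sum]
    exact Finset.sum_congr rfl fun m _ => by rw [hcB]
  have hbsum : b = ∑ m ∈ (cB.repr b).support, (cB.repr b) m • f m := by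
    conv_lhs => rw [← cB.linearCombination_repr b]
    rw [Finsupp.linearCombination_apply, Finsupp.sum]
    exact Finset.sum_congr rfl fun m _ => by rw [hcB]
  have hφab : φ (a * b) = ∑ m ∈ (cB.repr a).support, ∑ m' ∈ (cB.repr b).support,
      (cB.repr a) m * (cB.repr b) m' * φ (f m * f m') := by
    conv_lhs => rw [hasum, hbsum]
    rw [Finset.sum_mul_sum, map_sum]
    refine Finset.sum_congr rfl fun m _ => ?_
    rw [map_sum]
    refine Finset.sum_congr rfl fun m' _ => ?_
    rw [smul_mul_smul_comm, map_smul, smul_eq_mul]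
  obtain ⟨t₀, ht₀⟩ := hpair m₀ hm₀s m₀' hm₀'s
  have hfinal : φ (a * b) = (cB.repr a) m₀ * (cB.repr b) m₀' * ((qh ^ (2 * t₀) : Rˣ) : R) := by
    rw [hφab]
    rw [Finset.sum_eq_single_of_mem m₀ hm₀s]
    · rw [Finset.sum_eq_single_of_mem m₀' hm₀'s]
      · rw [ht₀, if_pos rfl]
      · intro m' hm' hne'
        obtain ⟨t, ht⟩ := hpair m₀ hm₀s m' hm'
        rw [ht, if_neg (hne m₀ hm₀s m' hm' (fun h => hne' h.2)), mul_zero]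
    · intro m hm hne'
      refine Finset.sum_eq_zero fun m' hm' => ?_
      obtain ⟨t, ht⟩ := hpair m hm m' hm'
      rw [ht, if_neg (hne m hm m' hm' (fun h => hne' h.1)), mul_zero]
  rw [hab, map_zero] at hfinal
  have : (cB.repr a) m₀ * (cB.repr b) m₀' * ((qh ^ (2 * t₀) : Rˣ) : R) ≠ 0 :=
    mul_ne_zero (mul_ne_zero (Finsupp.mem_support_iff.1 hm₀s) (Finsupp.mem_support_iff.1 hm₀'s))
      (Units.ne_zero _)
  exact this hfinal.symm
end

section
/- Let S be a q-commuting set of nonzero elements of an R-domain A. (a) If a ∈ A and m ∈ Mon(S) satisfy a·m ∈ LPol(S), then a ∈ LPol(S). (b) LPol(S) is an R-subalgebra of A. -/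
/-- `x` and `y` *q-commute*: `x * y = q̂^(2t) • (y * x)` for some `t ∈ ℤ`. -/
def QComm {R : Type*} [CommRing R] {A : Type*} [Ring A] [Algebra R A]
    (qh : Rˣ) (x y : A) : Prop :=
  ∃ t : ℤ, x * y = ((qh ^ (2 * t) : Rˣ) : R) • (y * x)

/-- `LPol R S` is the set of `a ∈ A` such that `a * m` lies in the `R`-subalgebra
generated by `S` (which is the `R`-span of the multiplicative monoid `Mon S` generated
by `S`) for some `S`-monomial `m ∈ Mon S`. -/
def LPol (R : Type*) [CommRing R] {A : Type*} [Ring A] [Algebra R A] (S : Set A) : Set A :=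
  {a : A | ∃ m ∈ Submonoid.closure S, a * m ∈ Algebra.adjoin R S}

/-- Let `S` be a q-commuting set of nonzero elements of an `R`-domain `A`.
(a) If `a * m ∈ LPol S` for some `S`-monomial `m ∈ Mon S`, then `a ∈ LPol S`.
(b) `LPol S` is an `R`-subalgebra of `A`. -/
theorem lpol_mem_and_subalgebra
    {R : Type*} [CommRing R] [IsDomain R] (qh : Rˣ)
    {A : Type*} [Ring A] [Algebra R A] [NoZeroDivisors A]
    (S : Set A) (h0 : ∀ x ∈ S, x ≠ 0)
    (hq : ∀ x ∈ S, ∀ y ∈ S, QComm qh x y) :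
    (∀ a : A, ∀ m ∈ Submonoid.closure S, a * m ∈ LPol R S → a ∈ LPol R S) ∧
    (∃ B : Subalgebra R A, (B : Set A) = LPol R S) := by
  -- elements of S q-commute with elements of the closure
  have key : ∀ m ∈ Submonoid.closure S, ∀ x ∈ S,
      ∃ t : ℤ, x * m = ((qh ^ (2 * t) : Rˣ) : R) • (m * x) := by
    intro m hm
    induction hm using Submonoid.closure_induction with
    | mem y hy => intro x hx; exact hq x hx y hy
    | one => intro x hx; exact ⟨0, by simp⟩
    | mul m1 m2 h1 h2 ih1 ih2 =>
      intro x hx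
      obtain ⟨t1, e1⟩ := ih1 x hx
      obtain ⟨t2, e2⟩ := ih2 x hx
      refine ⟨t1 + t2, ?_⟩
      have hu : ((qh ^ (2 * (t1 + t2)) : Rˣ) : R)
          = ((qh ^ (2 * t2) : Rˣ) : R) * ((qh ^ (2 * t1) : Rˣ) : R) := by
        rw [← Units.val_mul, ← zpow_add]
        congr 1
        ring
      calc x * (m1 * m2) = (x * m1) * m2 := by rw [mul_assoc]
        _ = ((qh ^ (2 * t1) : Rˣ) : R) • (m1 * (x * m2)) := by
            rw [e1, smul_mul_assoc, mul_assoc]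
        _ = ((qh ^ (2 * t1) : Rˣ) : R) • (((qh ^ (2 * t2) : Rˣ) : R) • (m1 * (m2 * x))) := by
            rw [e2, mul_smul_comm]
        _ = ((qh ^ (2 * (t1 + t2)) : Rˣ) : R) • (m1 * m2 * x) := by
            rw [smul_smul, hu, mul_assoc]
            ring_nf
  -- elements of the closure q-commute with each other
  have key3 : ∀ m ∈ Submonoid.closure S, ∀ n ∈ Submonoid.closure S,
      ∃ t : ℤ, m * n = ((qh ^ (2 * t) : Rˣ) : R) • (n * m) := by
    intro m hm
    induction hm using Submonoid.closure_induction with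
    | mem y hy => intro n hn; exact key n hn y hy
    | one => intro n hn; exact ⟨0, by simp⟩
    | mul m1 m2 h1 h2 ih1 ih2 =>
      intro n hn
      obtain ⟨t1, e1⟩ := ih1 n hn
      obtain ⟨t2, e2⟩ := ih2 n hn
      refine ⟨t1 + t2, ?_⟩
      have hu : ((qh ^ (2 * (t1 + t2)) : Rˣ) : R)
          = ((qh ^ (2 * t1) : Rˣ) : R) * ((qh ^ (2 * t2) : Rˣ) : R) := by
        rw [← Units.val_mul, ← zpow_add]
        congr 1
        ring
      calc m1 * m2 * n = m1 * (m2 * n) := by rw [mul_assoc]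
        _ = ((qh ^ (2 * t2) : Rˣ) : R) • ((m1 * n) * m2) := by
            rw [e2, mul_smul_comm, mul_assoc]
        _ = ((qh ^ (2 * t2) : Rˣ) : R) • (((qh ^ (2 * t1) : Rˣ) : R) • (n * m1 * m2)) := by
            rw [e1, smul_mul_assoc]
        _ = ((qh ^ (2 * (t1 + t2)) : Rˣ) : R) • (n * (m1 * m2)) := by
            rw [smul_smul, hu, mul_assoc]
            ring_nf
  -- move a monomial past an adjoin element
  have key2 : ∀ m ∈ Submonoid.closure S, ∀ p ∈ Algebra.adjoin R S,
      ∃ p' ∈ Algebra.adjoin R S, p * m = m * p' := by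
    intro m hm p hp
    induction hp using Algebra.adjoin_induction with
    | mem x hx =>
      obtain ⟨t, e⟩ := key m hm x hx
      exact ⟨((qh ^ (2 * t) : Rˣ) : R) • x,
        Subalgebra.smul_mem _ (Algebra.subset_adjoin hx) _, by rw [e, mul_smul_comm]⟩
    | algebraMap r =>
      exact ⟨algebraMap R A r, Subalgebra.algebraMap_mem _ r, Algebra.commutes r m⟩
    | add p1 p2 _ _ ih1 ih2 =>
      obtain ⟨q1, hq1, e1⟩ := ih1
      obtain ⟨q2, hq2, e2⟩ := ih2
      exact ⟨q1 + q2, add_mem hq1 hq2, by rw [add_mul, mul_add, e1, e2]⟩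
    | mul p1 p2 _ _ ih1 ih2 =>
      obtain ⟨q1, hq1, e1⟩ := ih1
      obtain ⟨q2, hq2, e2⟩ := ih2
      exact ⟨q1 * q2, mul_mem hq1 hq2, by
        rw [mul_assoc, e2, ← mul_assoc, e1, mul_assoc]⟩
  have hclos : ∀ m ∈ Submonoid.closure S, m ∈ Algebra.adjoin R S := by
    intro m hm
    exact Submonoid.closure_le.mpr (Algebra.subset_adjoin (R := R)) hm
  constructor
  · rintro a m hm ⟨m', hm', hmem⟩
    exact ⟨m * m', mul_mem hm hm', by rwa [← mul_assoc]⟩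
  · refine ⟨{ carrier := LPol R S
              one_mem' := ⟨1, one_mem _, by simpa using (one_mem (Algebra.adjoin R S))⟩
              zero_mem' := ⟨1, one_mem _, by simpa using (zero_mem (Algebra.adjoin R S))⟩
              algebraMap_mem' := fun r =>
                ⟨1, one_mem _, by simpa using Subalgebra.algebraMap_mem (Algebra.adjoin R S) r⟩
              add_mem' := ?_
              mul_mem' := ?_ }, rfl⟩
    · rintro a b ⟨m, hm, ha⟩ ⟨m', hm', hb⟩
      refine ⟨m' * m, mul_mem hm' hm, ?_⟩
      obtain ⟨p', hp', e⟩ := key2 m hm (b * m') hb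
      have h3 : a * b * (m' * m) = a * m * p' := by
        rw [mul_assoc a b, ← mul_assoc b, e, ← mul_assoc]
      rw [h3]
      exact mul_mem ha hp'
    · rintro a b ⟨m, hm, ha⟩ ⟨m', hm', hb⟩
      refine ⟨m * m', mul_mem hm hm', ?_⟩
      obtain ⟨t, e⟩ := key3 m hm m' hm'
      have h1 : a * (m * m') ∈ Algebra.adjoin R S := by
        rw [← mul_assoc]
        exact mul_mem ha (hclos m' hm')
      have h2 : b * (m * m') ∈ Algebra.adjoin R S := by
        rw [e, mul_smul_comm, ← mul_assoc]
        exact Subalgebra.smul_mem _ (mul_mem hb (hclos m hm)) _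
      rw [add_mul]
      exact add_mem h1 h2
end
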